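/- arXiv:2207.08721 — 3 statements merged into one kernel-verified Lean document; each statement's English description precedes it below -/
import Mathlib

section
/- The constant 4 in the inequality ω(XY) ≤ 4 ω(X) ω(Y) is attained: for X = [[0,2],[0,0]] and Y = [[0,0],[2,0]] in M_2(ℂ), one has ω(X) = ω(Y) = 1 and ω(XY) = 4. -/
open Matrix Complex
open scoped ComplexOrder

/-- Hermitian real part `(X + Xᴴ)/2`. -/
noncomputable def reM {m : ℕ} (X : Matrix (Fin m) (Fin m) ℂ) : Matrix (Fin m) (Fin m) ℂ :=
  (1 / 2 : ℂ) • (X + Xᴴ)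

/-- Hermitian imaginary part `(X - Xᴴ)/(2i)`. -/
noncomputable def imM {m : ℕ} (X : Matrix (Fin m) (Fin m) ℂ) : Matrix (Fin m) (Fin m) ℂ :=
  (-Complex.I / 2) • (X - Xᴴ)

/-- Numerical range `W(X) = {⟨Xx, x⟩ : ‖x‖ = 1}`. -/
noncomputable def numRange {m : ℕ} (X : Matrix (Fin m) (Fin m) ℂ) : Set ℂ :=
  {z | ∃ x : EuclideanSpace ℂ (Fin m), ‖x‖ = 1 ∧ z = star (x : Fin m → ℂ) ⬝ᵥ X.mulVec x}

/-- Numerical radius `ω(X) = sup {|z| : z ∈ W(X)}`. -/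
noncomputable def numRadius {m : ℕ} (X : Matrix (Fin m) (Fin m) ℂ) : ℝ :=
  sSup ((fun z : ℂ => ‖z‖) '' numRange X)

/-- The sector `S_α`. -/
def sector (α : ℝ) : Set ℂ := {z : ℂ | 0 < z.re ∧ |z.im| ≤ Real.tan α * z.re}

/-- Operator norm of a matrix acting on Euclidean space. -/
noncomputable def opNorm {m : ℕ} (X : Matrix (Fin m) (Fin m) ℂ) : ℝ :=
  ‖Matrix.toEuclideanCLM (𝕜 := ℂ) X‖

/-! For a unit vector `x ∈ ℂ²` the quadratic form of `[[0, c], [0, 0]]` (or of its transpose) has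
modulus `‖c‖ ‖x₀‖ ‖x₁‖ ≤ ‖c‖ / 2` by AM-GM, with equality at `(1, 1) / √2`, so `ω(X) = ω(Y) = 1`.
The product `XY = diag(4, 0)` has quadratic form `4 ‖x₀‖²`, maximal at `e₀`, so `ω(XY) = 4`. -/

lemma numRadius_eq_of_forall_le_of_exists_eq {m : ℕ} {X : Matrix (Fin m) (Fin m) ℂ} {r : ℝ}
    (hle : ∀ x : EuclideanSpace ℂ (Fin m), ‖x‖ = 1 → ‖star (x : Fin m → ℂ) ⬝ᵥ X *ᵥ x‖ ≤ r)
    (hex : ∃ x : EuclideanSpace ℂ (Fin m), ‖x‖ = 1 ∧ ‖star (x : Fin m → ℂ) ⬝ᵥ X *ᵥ x‖ = r) :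
    numRadius X = r := by
  refine IsGreatest.csSup_eq ⟨?_, ?_⟩
  · obtain ⟨x, hx, hr⟩ := hex
    exact ⟨_, ⟨x, hx, rfl⟩, hr⟩
  · rintro _ ⟨_, ⟨x, hx, rfl⟩, rfl⟩
    exact hle x hx

lemma star_dotProduct_mulVec_fin_two (M : Matrix (Fin 2) (Fin 2) ℂ) (v : Fin 2 → ℂ) :
    star v ⬝ᵥ M *ᵥ v =
      star (v 0) * (M 0 0 * v 0 + M 0 1 * v 1) + star (v 1) * (M 1 0 * v 0 + M 1 1 * v 1) := by
  simp [dotProduct, mulVec, Fin.sum_univ_two]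

lemma EuclideanSpace.norm_sq_add_norm_sq_of_norm_eq_one {x : EuclideanSpace ℂ (Fin 2)}
    (hx : ‖x‖ = 1) : ‖x 0‖ ^ 2 + ‖x 1‖ ^ 2 = 1 := by
  simpa [Fin.sum_univ_two, hx] using (EuclideanSpace.norm_sq_eq x).symm

lemma EuclideanSpace.norm_mul_norm_le_half_of_norm_eq_one {x : EuclideanSpace ℂ (Fin 2)}
    (hx : ‖x‖ = 1) : ‖x 0‖ * ‖x 1‖ ≤ 1 / 2 := by
  nlinarith [sq_nonneg (‖x 0‖ - ‖x 1‖), norm_sq_add_norm_sq_of_norm_eq_one hx]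

lemma numRadius_eq_half_of_norm_quadForm_eq {X : Matrix (Fin 2) (Fin 2) ℂ} {r : ℝ} (hr : 0 ≤ r)
    (hq : ∀ x : EuclideanSpace ℂ (Fin 2),
      ‖star (x : Fin 2 → ℂ) ⬝ᵥ X *ᵥ x‖ = r * (‖x 0‖ * ‖x 1‖)) :
    numRadius X = r / 2 := by
  refine numRadius_eq_of_forall_le_of_exists_eq (fun x hx => ?_) ?_
  · rw [hq]
    nlinarith [EuclideanSpace.norm_mul_norm_le_half_of_norm_eq_one hx]
  · refine ⟨!₂[((Real.sqrt 2)⁻¹ : ℝ), ((Real.sqrt 2)⁻¹ : ℝ)], ?_, ?_⟩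
    · rw [EuclideanSpace.norm_eq]
      norm_num [Fin.sum_univ_two]
    · rw [hq]
      norm_num [← sq]
      ring

lemma numRadius_nilpotent_upper (c : ℂ) :
    numRadius (!![0, c; 0, 0] : Matrix (Fin 2) (Fin 2) ℂ) = ‖c‖ / 2 :=
  numRadius_eq_half_of_norm_quadForm_eq (norm_nonneg c) fun x => by
    rw [star_dotProduct_mulVec_fin_two]
    simp
    ring

lemma numRadius_nilpotent_lower (c : ℂ) :
    numRadius (!![0, 0; c, 0] : Matrix (Fin 2) (Fin 2) ℂ) = ‖c‖ / 2 :=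
  numRadius_eq_half_of_norm_quadForm_eq (norm_nonneg c) fun x => by
    rw [star_dotProduct_mulVec_fin_two]
    simp
    ring

lemma numRadius_diag_single (d : ℂ) :
    numRadius (!![d, 0; 0, 0] : Matrix (Fin 2) (Fin 2) ℂ) = ‖d‖ := by
  have hq (x : EuclideanSpace ℂ (Fin 2)) :
      ‖star (x : Fin 2 → ℂ) ⬝ᵥ !![d, 0; 0, 0] *ᵥ x‖ = ‖d‖ * ‖x 0‖ ^ 2 := by
    rw [star_dotProduct_mulVec_fin_two]
    simp
    ring
  refine numRadius_eq_of_forall_le_of_exists_eq (fun x hx => ?_)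
    ⟨EuclideanSpace.single 0 1, by simp, by simp⟩
  rw [hq]
  nlinarith [EuclideanSpace.norm_sq_add_norm_sq_of_norm_eq_one hx, norm_nonneg d,
    sq_nonneg ‖x 1‖]

theorem numRadius_four_sharp :
    numRadius (!![0, 2; 0, 0] : Matrix (Fin 2) (Fin 2) ℂ) = 1 ∧
    numRadius (!![0, 0; 2, 0] : Matrix (Fin 2) (Fin 2) ℂ) = 1 ∧
    numRadius ((!![0, 2; 0, 0] : Matrix (Fin 2) (Fin 2) ℂ) * !![0, 0; 2, 0]) = 4 := by
  have hXY : (!![0, 2; 0, 0] * !![0, 0; 2, 0] : Matrix (Fin 2) (Fin 2) ℂ) = !![4, 0; 0, 0] := by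
    rw [Matrix.mul_fin_two]
    norm_num
  rw [numRadius_nilpotent_upper, numRadius_nilpotent_lower, hXY, numRadius_diag_single]
  norm_num
end

section
/- For X = Y = [[0,2],[0,0]] in M_2(ℂ), ω(X) = 1 and ω(X ∘ X) = 2, where ∘ is the Hadamard (entrywise) product; hence the constant 2 in ω(X ∘ Y) ≤ 2 ω(X) ω(Y) is best possible. -/
/-
The quadratic form of `!![0, c; 0, 0]` at a unit vector `x` is `c · conj(x₀) · x₁`, whose modulus is
at most `‖c‖ (|x₀|² + |x₁|²)/2 = ‖c‖/2` by AM–GM, with equality at `x = (1, 1)/√2`. Hence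
`ω(!![0, c; 0, 0]) = ‖c‖/2`, which is `1` for `c = 2` and `2` for the Hadamard square `c = 4`.
-/

open Matrix Complex
open scoped ComplexOrder

lemma hadamard_two_by_two {α : Type*} [Mul α] (a b c d a' b' c' d' : α) :
    !![a, b; c, d] ⊙ !![a', b'; c', d'] = !![a * a', b * b'; c * c', d * d'] := by
  ext i j
  fin_cases i <;> fin_cases j <;> rfl

lemma EuclideanSpace.norm_sq_fin_two {𝕜 : Type*} [RCLike 𝕜] (x : EuclideanSpace 𝕜 (Fin 2)) :
    ‖x‖ ^ 2 = ‖x 0‖ ^ 2 + ‖x 1‖ ^ 2 := by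
  simp [EuclideanSpace.norm_sq_eq, Fin.sum_univ_two]

lemma star_dotProduct_mulVec_upperNilpotent {R : Type*} [CommSemiring R] [StarRing R] (c : R)
    (x : Fin 2 → R) : star x ⬝ᵥ !![0, c; 0, 0] *ᵥ x = c * (star (x 0) * x 1) := by
  simp [dotProduct, mulVec, Fin.sum_univ_two]
  ring

lemma norm_le_of_mem_numRange_upperNilpotent {c z : ℂ} (hz : z ∈ numRange !![0, c; 0, 0]) :
    ‖z‖ ≤ ‖c‖ / 2 := by
  obtain ⟨x, hx, rfl⟩ := hz
  have hunit : ‖x 0‖ ^ 2 + ‖x 1‖ ^ 2 = 1 := by rw [← EuclideanSpace.norm_sq_fin_two, hx, one_pow]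
  rw [star_dotProduct_mulVec_upperNilpotent, norm_mul, norm_mul, norm_star]
  nlinarith [sq_nonneg (‖x 0‖ - ‖x 1‖), norm_nonneg c]

lemma exists_mem_numRange_upperNilpotent_norm_eq (c : ℂ) :
    ∃ z ∈ numRange !![0, c; 0, 0], ‖z‖ = ‖c‖ / 2 := by
  set a : ℂ := (((Real.sqrt 2)⁻¹ : ℝ) : ℂ)
  have ha : ‖a‖ ^ 2 = 1 / 2 := by simp [a, inv_pow, Real.sq_sqrt zero_le_two]
  refine ⟨_, ⟨WithLp.toLp 2 ![a, a], ?_, rfl⟩, ?_⟩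
  · rw [← sq_eq_sq₀ (norm_nonneg _) zero_le_one, EuclideanSpace.norm_sq_fin_two]
    simp [ha]
    norm_num
  · rw [star_dotProduct_mulVec_upperNilpotent]
    simp [← sq, ha]
    ring

lemma numRadius_upperNilpotent (c : ℂ) : numRadius !![0, c; 0, 0] = ‖c‖ / 2 := by
  obtain ⟨z, hz, hz_norm⟩ := exists_mem_numRange_upperNilpotent_norm_eq c
  refine IsGreatest.csSup_eq ⟨⟨z, hz, hz_norm⟩, ?_⟩
  rintro _ ⟨w, hw, rfl⟩
  exact norm_le_of_mem_numRange_upperNilpotent hw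

theorem numRadius_hadamard_two_sharp :
    numRadius (!![0, 2; 0, 0] : Matrix (Fin 2) (Fin 2) ℂ) = 1 ∧
    numRadius ((!![0, 2; 0, 0] : Matrix (Fin 2) (Fin 2) ℂ) ⊙ !![0, 2; 0, 0]) = 2 := by
  simp only [hadamard_two_by_two, mul_zero, numRadius_upperNilpotent]
  norm_num
end

section
/- Let X ∈ M_n(ℂ) with W(X) ⊂ S_α for some α ∈ [0, π/2). Then ‖X‖ ≤ sec(α) ‖Re(X)‖, where ‖·‖ is the operator norm. -/
open Matrix Complex
open scoped ComplexOrder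

/-! With `A = Re X` and `B = Im X`, the sector condition gives that `A` is positive definite
and `-tan α • A ≤ B ≤ tan α • A` in the Loewner order. Conjugating by `A^{-1/2}` gives a
self-adjoint `C = A^{-1/2} B A^{-1/2}` with `-tan α ≤ C ≤ tan α`, hence `‖C‖ ≤ tan α`. Then
`X = A^{1/2} (1 + i C) A^{1/2}`, and the C⋆-identity gives `‖1 + i C‖² = ‖1 + C²‖ ≤ sec² α`. -/

open scoped Ring

section CStarAlgebra

variable {A : Type*} [CStarAlgebra A]

lemma IsSelfAdjoint.norm_one_add_I_smul_le {a : A} (ha : IsSelfAdjoint a) :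
    ‖1 + I • a‖ ≤ √(1 + ‖a‖ ^ 2) := by
  nontriviality A
  refine Real.le_sqrt_of_sq_le ?_
  have hstar : star (1 + I • a) * (1 + I • a) = 1 + a * a := by
    have : star (1 + I • a) = 1 - I • a := by
      simp [star_smul, ha.star_eq, sub_eq_add_neg]
    rw [this, sub_mul, mul_add, mul_add, smul_mul_smul_comm, I_mul_I]
    simp only [one_mul, mul_one, neg_smul, one_smul]
    abel
  calc ‖1 + I • a‖ ^ 2 = ‖1 + a * a‖ := by rw [sq, ← CStarRing.norm_star_mul_self, hstar]
    _ ≤ ‖(1 : A)‖ + ‖a‖ ^ 2 := by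
      rw [sq, ← CStarRing.norm_star_mul_self, ha.star_eq]; exact norm_add_le _ _
    _ = 1 + ‖a‖ ^ 2 := by rw [CStarRing.norm_one]

variable [PartialOrder A] [StarOrderedRing A]

lemma IsSelfAdjoint.norm_le_of_mem_Icc {a : A} (ha : IsSelfAdjoint a) {r : ℝ} (hr : 0 ≤ r)
    (h : a ∈ Set.Icc (-algebraMap ℝ A r) (algebraMap ℝ A r)) : ‖a‖ ≤ r := by
  rw [← cfc_id' ℝ a]
  refine norm_cfc_le hr fun x hx => abs_le.mpr ⟨?_, ?_⟩
  · rw [← map_neg] at h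
    exact ((algebraMap_le_iff_le_spectrum ha).mp h.1) x hx
  · exact ((le_algebraMap_iff_spectrum_le ha).mp h.2) x hx

open CFC in
lemma IsStrictlyPositive.norm_add_I_smul_le {a b : A} (ha : IsStrictlyPositive a) {t : ℝ}
    (ht : 0 ≤ t) (hb : b ∈ Set.Icc (-(t • a)) (t • a)) : ‖a + I • b‖ ≤ √(1 + t ^ 2) * ‖a‖ := by
  set c := conjSqrt a⁻¹ʳ b
  have hc : c ∈ Set.Icc (-algebraMap ℝ A t) (algebraMap ℝ A t) := by
    have hmap : conjSqrt a⁻¹ʳ (t • a) = algebraMap ℝ A t := by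
      rw [map_smul, conjSqrt_ringInverse_self a ha, Algebra.algebraMap_eq_smul_one]
    rw [← hmap, ← map_neg]
    exact ⟨conjSqrt_monotone hb.1, conjSqrt_monotone hb.2⟩
  have hc_sa : IsSelfAdjoint c := by
    simpa using (IsSelfAdjoint.algebraMap A (IsSelfAdjoint.all t)).sub
      (IsSelfAdjoint.of_nonneg (sub_nonneg.2 hc.2))
  have hab : a + I • b = CFC.sqrt a * (1 + I • c) * CFC.sqrt a := by
    rw [mul_add, add_mul, mul_one, CFC.sqrt_mul_sqrt_self a ha.nonneg, mul_smul_comm, smul_mul_assoc,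
      ← conjSqrt_apply, conjSqrt_conjSqrt_ringInverse a b ha]
  calc ‖a + I • b‖ ≤ ‖CFC.sqrt a‖ * ‖1 + I • c‖ * ‖CFC.sqrt a‖ := by
        rw [hab]; exact norm_mul₃_le
    _ = ‖1 + I • c‖ * ‖a‖ := by
        rw [CFC.norm_sqrt a ha.nonneg, mul_right_comm, Real.mul_self_sqrt (norm_nonneg a), mul_comm]
    _ ≤ √(1 + t ^ 2) * ‖a‖ := by
        gcongr
        refine hc_sa.norm_one_add_I_smul_le.trans ?_
        gcongr
        exact hc_sa.norm_le_of_mem_Icc ht hc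

end CStarAlgebra

lemma mem_sector_of_ofReal_mul_mem {α r : ℝ} (hr : 0 < r) {z : ℂ} (h : (r : ℂ) * z ∈ sector α) :
    z ∈ sector α := by
  simp only [sector, Set.mem_ofPred_eq, re_ofReal_mul, im_ofReal_mul, abs_mul, abs_of_pos hr,
    mul_left_comm _ r] at h
  exact ⟨pos_of_mul_pos_right h.1 hr.le, le_of_mul_le_mul_left h.2 hr⟩

namespace Matrix

variable {m : ℕ} (X : Matrix (Fin m) (Fin m) ℂ)

lemma reM_isHermitian : (reM X).IsHermitian := by
  simp [reM, IsHermitian, conjTranspose_smul, add_comm]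

lemma imM_isHermitian : (imM X).IsHermitian := by
  rw [imM, IsHermitian, conjTranspose_smul, conjTranspose_sub, conjTranspose_conjTranspose,
    ← neg_sub, smul_neg, ← neg_smul]
  congr 1
  simp [neg_div]

lemma reM_add_I_smul_imM : reM X + I • imM X = X := by
  rw [reM, imM, smul_smul, show I * (-I / 2) = 1 / 2 by
    linear_combination (-1 / 2 : ℂ) * I_sq]
  module

lemma star_dotProduct_conjTranspose_mulVec {ι R : Type*} [Fintype ι] [CommSemiring R] [StarRing R]
    (M : Matrix ι ι R) (x : ι → R) : star x ⬝ᵥ Mᴴ *ᵥ x = star (star x ⬝ᵥ M *ᵥ x) := by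
  rw [dotProduct_mulVec, ← star_mulVec, star_dotProduct]

lemma star_dotProduct_reM_mulVec (x : Fin m → ℂ) :
    star x ⬝ᵥ reM X *ᵥ x = ((star x ⬝ᵥ X *ᵥ x).re : ℂ) := by
  rw [reM, smul_mulVec, add_mulVec, dotProduct_smul, dotProduct_add,
    star_dotProduct_conjTranspose_mulVec, Complex.star_def, Complex.re_eq_add_conj, smul_eq_mul]
  ring

lemma star_dotProduct_imM_mulVec (x : Fin m → ℂ) :
    star x ⬝ᵥ imM X *ᵥ x = ((star x ⬝ᵥ X *ᵥ x).im : ℂ) := by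
  rw [imM, smul_mulVec, sub_mulVec, dotProduct_smul, dotProduct_sub,
    star_dotProduct_conjTranspose_mulVec, Complex.star_def, Complex.im_eq_sub_conj, smul_eq_mul]
  field_simp
  linear_combination ((starRingEnd ℂ) (star x ⬝ᵥ X *ᵥ x) - star x ⬝ᵥ X *ᵥ x) * I_sq

lemma star_dotProduct_mulVec_mem_sector {α : ℝ} (h : numRange X ⊆ sector α) {x : Fin m → ℂ}
    (hx : x ≠ 0) : star x ⬝ᵥ X *ᵥ x ∈ sector α := by
  set v : EuclideanSpace ℂ (Fin m) := WithLp.toLp 2 x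
  have hv : v ≠ 0 := by simpa [v] using hx
  refine mem_sector_of_ofReal_mul_mem (r := ‖v‖⁻¹ ^ 2) (by positivity)
    (h ⟨(‖v‖⁻¹ : ℂ) • v, norm_smul_inv_norm hv, ?_⟩)
  simp [v, mulVec_smul, star_smul]
  ring

lemma abs_im_le_tan_mul_re {α : ℝ} (h : numRange X ⊆ sector α) (x : Fin m → ℂ) :
    |(star x ⬝ᵥ X *ᵥ x).im| ≤ Real.tan α * (star x ⬝ᵥ X *ᵥ x).re := by
  rcases eq_or_ne x 0 with rfl | hx
  · simp
  · exact (star_dotProduct_mulVec_mem_sector X h hx).2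

open scoped MatrixOrder

lemma isStrictlyPositive_reM {α : ℝ} (h : numRange X ⊆ sector α) : IsStrictlyPositive (reM X) := by
  rw [isStrictlyPositive_iff_posDef]
  refine PosDef.of_dotProduct_mulVec_pos (reM_isHermitian X) fun x hx => ?_
  rw [star_dotProduct_reM_mulVec]
  exact_mod_cast (star_dotProduct_mulVec_mem_sector X h hx).1

lemma imM_mem_Icc {α : ℝ} (h : numRange X ⊆ sector α) :
    imM X ∈ Set.Icc (-(Real.tan α • reM X)) (Real.tan α • reM X) := by
  have hre := (reM_isHermitian X).isSelfAdjoint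
  have him := (imM_isHermitian X).isSelfAdjoint
  have hbound := abs_im_le_tan_mul_re X h
  constructor <;> rw [le_iff]
  · refine PosSemidef.of_dotProduct_mulVec_nonneg (him.sub ((IsSelfAdjoint.all _).smul hre).neg)
      fun x => ?_
    simp only [sub_mulVec, neg_mulVec, smul_mulVec, dotProduct_sub, dotProduct_neg, dotProduct_smul,
      star_dotProduct_reM_mulVec, star_dotProduct_imM_mulVec]
    rw [Complex.real_smul, ← ofReal_mul, sub_neg_eq_add, ← ofReal_add, zero_le_real]
    linarith [(abs_le.mp (hbound x)).1]
  · refine PosSemidef.of_dotProduct_mulVec_nonneg (((IsSelfAdjoint.all _).smul hre).sub him)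
      fun x => ?_
    simp only [sub_mulVec, smul_mulVec, dotProduct_sub, dotProduct_smul,
      star_dotProduct_reM_mulVec, star_dotProduct_imM_mulVec]
    rw [Complex.real_smul, ← ofReal_mul, ← ofReal_sub, zero_le_real]
    linarith [(abs_le.mp (hbound x)).2]

end Matrix

open scoped Matrix.Norms.L2Operator MatrixOrder

theorem opNorm_le_sec_mul_opNorm_reM {n : ℕ} (X : Matrix (Fin n) (Fin n) ℂ) (α : ℝ)
    (hα : α ∈ Set.Ico 0 (Real.pi / 2)) (h : numRange X ⊆ sector α) :
    opNorm X ≤ (Real.cos α)⁻¹ * opNorm (reM X) := by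
  simp only [opNorm, ← Matrix.cstar_norm_def]
  obtain ⟨hα₀, hα₁⟩ := hα
  have hcos : 0 < Real.cos α := Real.cos_pos_of_mem_Ioo ⟨by linarith [Real.pi_pos], hα₁⟩
  have htan : 0 ≤ Real.tan α := Real.tan_nonneg_of_nonneg_of_le_pi_div_two hα₀ hα₁.le
  have hsec : √(1 + Real.tan α ^ 2) = (Real.cos α)⁻¹ := by
    rw [← Real.inv_sqrt_one_add_tan_sq hcos, inv_inv]
  simpa only [X.reM_add_I_smul_imM, hsec] using
    (X.isStrictlyPositive_reM h).norm_add_I_smul_le htan (X.imM_mem_Icc h)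
end
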